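/- Let W be a Whitney covering of a domain Ω ⊂ ℝ^d (so C_W ℓ(Q) ≤ dist(Q, ∂Ω) ≤ 4C_W ℓ(Q) for all Q ∈ W), let Q ∈ W, η > 0 and r > 0. Then Σ over cubes S ∈ W with D(Q,S) > r of (∫_S g dm) / D(Q,S)^{d+η} ≤ C_d · (inf_{y∈Q} Mg(y)) / r^η, where D(Q,S) = ℓ(Q)+ℓ(S)+dist(Q,S) is the long distance and M is the non-centered maximal operator. -/

import Mathlib

/-!
Split the cubes `S` with `D(Q,S) > r` into the dyadic shells `2ᵏr ≤ D(Q,S) < 2ᵏ⁺¹r`. Every cube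
of the `k`-th shell, and `Q` itself, lies in the ball `B` of radius `2ᵏ⁺¹r` about the centre of
`Q`; as Whitney cubes overlap only in null sets, the shell contributes at most
`∫_B g / (2ᵏr)^(d+η) ≤ |B| · inf_Q Mg / (2ᵏr)^(d+η) = 4ᵈ 2^(-kη) inf_Q Mg / r^η`,
and summing the geometric series over `k` gives the constant `4ᵈ / (1 - 2^(-η))`.
-/

open MeasureTheory ENNReal

/-- An axis-parallel cube in `ℝ^d`, identified with the closed ball of radius `side/2`
around its center in the sup metric on `Fin d → ℝ`. -/
structure Cube (d : ℕ) where
  center : Fin d → ℝ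
  side : ℝ
  side_pos : 0 < side

/-- The set of points of a cube. -/
def Cube.toSet {d : ℕ} (Q : Cube d) : Set (Fin d → ℝ) :=
  Metric.closedBall Q.center (Q.side / 2)

/-- Distance between two sets. -/
noncomputable def setDist {d : ℕ} (A B : Set (Fin d → ℝ)) : ℝ :=
  sInf (Set.image2 dist A B)

/-- The long distance `D(Q,S) = ℓ(Q) + ℓ(S) + dist(Q,S)` between two cubes. -/
noncomputable def longDist {d : ℕ} (Q S : Cube d) : ℝ :=
  Q.side + S.side + setDist Q.toSet S.toSet

/-- A Whitney covering of `Ω`: a family of essentially disjoint (dyadic-type) cubes whose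
union is `Ω`, with side-lengths comparable to the distance to `∂Ω`, and finite
superposition of the dilated cubes `50Q`. -/
structure WhitneyCovering (d : ℕ) (Ω : Set (Fin d → ℝ)) where
  cubes : Set (Cube d)
  covers : (⋃ Q ∈ cubes, Q.toSet) = Ω
  essDisjoint : ∀ Q ∈ cubes, ∀ S ∈ cubes, Q ≠ S →
    interior Q.toSet ∩ interior S.toSet = ∅
  CW : ℝ
  one_le_CW : 1 ≤ CW
  dist_lb : ∀ Q ∈ cubes, CW * Q.side ≤ setDist Q.toSet (frontier Ω)
  dist_ub : ∀ Q ∈ cubes, setDist Q.toSet (frontier Ω) ≤ 4 * CW * Q.side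
  finiteOverlap : ∃ N : ℕ, ∀ x : Fin d → ℝ,
    {Q ∈ cubes | x ∈ Metric.closedBall Q.center (25 * Q.side)}.Finite ∧
    {Q ∈ cubes | x ∈ Metric.closedBall Q.center (25 * Q.side)}.ncard ≤ N

/-- `S ∈ SH_ρ(P)` : the cube `S` of the covering lies in the `ρ`-shadow of `P`, i.e.
`S ⊆ B(x_P, ρ ℓ(P))`. -/
def memShadow {d : ℕ} {Ω : Set (Fin d → ℝ)} (W : WhitneyCovering d Ω) (ρ : ℝ)
    (S P : Cube d) : Prop :=
  S ∈ W.cubes ∧ P ∈ W.cubes ∧ S.toSet ⊆ Metric.closedBall P.center (ρ * P.side)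

/-- An `ε`-admissible chain of Whitney cubes joining `Q` to `S`. -/
structure AdmissibleChain {d : ℕ} {Ω : Set (Fin d → ℝ)} (W : WhitneyCovering d Ω)
    (ε : ℝ) (Q S : Cube d) where
  M : ℕ
  M_pos : 0 < M
  c : Fin M → Cube d
  mem : ∀ j, c j ∈ W.cubes
  first : c ⟨0, M_pos⟩ = Q
  last : c ⟨M - 1, Nat.sub_lt M_pos Nat.one_pos⟩ = S
  neighbors : ∀ (j : ℕ) (h : j + 1 < M),
    ((c ⟨j, Nat.lt_of_succ_lt h⟩).toSet ∩ (c ⟨j + 1, h⟩).toSet).Nonempty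
  length_le : ∑ j, (c j).side ≤ ε⁻¹ * longDist Q S
  j₀ : Fin M
  growth₁ : ∀ j : Fin M, j ≤ j₀ → ε * longDist Q (c j) ≤ (c j).side
  growth₂ : ∀ j : Fin M, j₀ ≤ j → ε * longDist (c j) S ≤ (c j).side

/-- `Ω` (with Whitney covering `W`) is an `ε`-uniform domain: any two Whitney cubes are
joined by an `ε`-admissible chain. -/
def IsUniformDomain {d : ℕ} {Ω : Set (Fin d → ℝ)} (W : WhitneyCovering d Ω) (ε : ℝ) : Prop :=
  ∀ Q ∈ W.cubes, ∀ S ∈ W.cubes, Nonempty (AdmissibleChain W ε Q S)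

/-- The non-centered Hardy–Littlewood maximal function, taken over cubes
(closed balls in the sup metric on `Fin d → ℝ`) containing `x`. -/
noncomputable def maximal (d : ℕ) (g : (Fin d → ℝ) → ℝ≥0∞) (x : Fin d → ℝ) : ℝ≥0∞ :=
  ⨆ (c : Fin d → ℝ) (r : ℝ) (_ : 0 < r) (_ : x ∈ Metric.closedBall c r),
    (∫⁻ y in Metric.closedBall c r, g y) / volume (Metric.closedBall c r)

theorem Convex.aedisjoint_of_disjoint_interior {E : Type*} [NormedAddCommGroup E]
    [NormedSpace ℝ E] [MeasurableSpace E] [BorelSpace E] [FiniteDimensional ℝ E]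
    (μ : Measure E) [μ.IsAddHaarMeasure] {s t : Set E} (hs : Convex ℝ s) (ht : Convex ℝ t)
    (h : Disjoint (interior s) (interior t)) : AEDisjoint μ s t := by
  have hsub : s ∩ t ⊆ frontier s ∪ frontier t := by
    rintro x ⟨hxs, hxt⟩
    by_cases hx : x ∈ interior s
    · refine Or.inr ⟨subset_closure hxt, fun hx' => h.le_bot ⟨hx, hx'⟩⟩
    · exact Or.inl ⟨subset_closure hxs, hx⟩
  exact measure_mono_null hsub
    (measure_union_null (hs.addHaar_frontier μ) (ht.addHaar_frontier μ))

theorem exists_mem_Ico_two_pow_mul {r x : ℝ} (hr : 0 < r) (hx : r ≤ x) :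
    ∃ k : ℕ, x ∈ Set.Ico (2 ^ k * r) (2 * (2 ^ k * r)) := by
  obtain ⟨k, hk₁, hk₂⟩ := exists_nat_pow_near ((one_le_div hr).2 hx) one_lt_two
  refine ⟨k, (le_div_iff₀ hr).1 hk₁, ?_⟩
  rw [pow_succ, div_lt_iff₀ hr] at hk₂
  linarith

theorem Real.pow_mul_rpow {a r : ℝ} (ha : 0 ≤ a) (hr : 0 ≤ r) (k : ℕ) (η : ℝ) :
    (a ^ k * r) ^ η = (a ^ η) ^ k * r ^ η := by
  rw [Real.mul_rpow (by positivity) hr, ← Real.rpow_natCast a k, ← Real.rpow_natCast _ k,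
    ← Real.rpow_mul ha, ← Real.rpow_mul ha, mul_comm η]

theorem ENNReal.tsum_subtype_lt_le_tsum_dyadic {α : Type*} {s : Set α} {D : α → ℝ} {r : ℝ}
    (hr : 0 < r) (F : α → ℝ≥0∞) :
    ∑' x : {x // x ∈ s ∧ r < D x}, F x ≤
      ∑' k : ℕ, ∑' x : {x | x ∈ s ∧ D x ∈ Set.Ico (2 ^ k * r) (2 * (2 ^ k * r))}, F x := by
  set T : ℕ → Set α := fun k => {x | x ∈ s ∧ D x ∈ Set.Ico (2 ^ k * r) (2 * (2 ^ k * r))}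
  have hcover : ∀ x, {x | x ∈ s ∧ r < D x}.indicator F x ≤ ∑' k, (T k).indicator F x := by
    intro x
    by_cases hx : x ∈ {x | x ∈ s ∧ r < D x}
    · obtain ⟨k, hk⟩ := exists_mem_Ico_two_pow_mul hr hx.2.le
      have hxT : x ∈ T k := ⟨hx.1, hk⟩
      rw [Set.indicator_of_mem hx, ← Set.indicator_of_mem hxT F]
      exact ENNReal.le_tsum k
    · rw [Set.indicator_of_notMem hx]; exact zero_le
  calc ∑' x : {x // x ∈ s ∧ r < D x}, F x
      = ∑' x, {x | x ∈ s ∧ r < D x}.indicator F x := tsum_subtype {x | x ∈ s ∧ r < D x} F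
    _ ≤ ∑' x, ∑' k, (T k).indicator F x := ENNReal.tsum_le_tsum hcover
    _ = ∑' k, ∑' x : T k, F x := by simp only [tsum_subtype, ENNReal.tsum_comm (α := α)]

theorem tsum_ofReal_div_two_pow_mul_rpow {c η r : ℝ} (hc : 0 ≤ c) (hr : 0 < r) :
    ∑' k : ℕ, ENNReal.ofReal (c / (2 ^ k * r) ^ η) =
      ENNReal.ofReal c * (1 - ENNReal.ofReal ((2 : ℝ) ^ η)⁻¹)⁻¹ / ENNReal.ofReal (r ^ η) := by
  have hterm : ∀ k : ℕ, ENNReal.ofReal (c / (2 ^ k * r) ^ η) =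
      ENNReal.ofReal (c / r ^ η) * ENNReal.ofReal ((2 : ℝ) ^ η)⁻¹ ^ k := by
    intro k
    rw [← ENNReal.ofReal_pow (by positivity), ← ENNReal.ofReal_mul (by positivity),
      Real.pow_mul_rpow zero_le_two hr.le, inv_pow]
    field_simp
  rw [tsum_congr hterm, ENNReal.tsum_mul_left, ENNReal.tsum_geometric,
    ENNReal.ofReal_div_of_pos (by positivity)]
  simp only [div_eq_mul_inv]; ring

theorem lintegral_le_iInf_maximal_mul_volume {d : ℕ} (g : (Fin d → ℝ) → ℝ≥0∞)
    {A : Set (Fin d → ℝ)} {c : Fin d → ℝ} {R : ℝ} (hR : 0 < R)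
    (hA : A ⊆ Metric.closedBall c R) :
    ∫⁻ y in Metric.closedBall c R, g y ≤
      (⨅ y ∈ A, maximal d g y) * volume (Metric.closedBall c R) := by
  have hmax : ∀ y ∈ A,
      (∫⁻ z in Metric.closedBall c R, g z) / volume (Metric.closedBall c R) ≤ maximal d g y :=
    fun y hy => le_iSup_of_le c (le_iSup_of_le R (le_iSup_of_le hR (le_iSup_of_le (hA hy) le_rfl)))
  exact (ENNReal.div_le_iff_le_mul (Or.inl (Metric.measure_closedBall_pos volume c hR).ne')
    (Or.inl measure_closedBall_lt_top.ne)).1 (le_iInf₂ hmax)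

namespace Cube

variable {d : ℕ}

theorem center_mem (Q : Cube d) : Q.center ∈ Q.toSet :=
  Metric.mem_closedBall_self (by linarith [Q.side_pos])

theorem convex_toSet (Q : Cube d) : Convex ℝ Q.toSet :=
  convex_closedBall _ _

theorem center_mem_interior (Q : Cube d) : Q.center ∈ interior Q.toSet :=
  Metric.ball_subset_interior_closedBall (Metric.mem_ball_self (by linarith [Q.side_pos]))

end Cube

theorem setDist_nonneg {d : ℕ} (A B : Set (Fin d → ℝ)) : 0 ≤ setDist A B :=
  Real.sInf_nonneg (by rintro x ⟨a, _, b, _, rfl⟩; exact dist_nonneg)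

theorem side_le_longDist {d : ℕ} (Q S : Cube d) : Q.side ≤ longDist Q S := by
  have := setDist_nonneg Q.toSet S.toSet
  have := S.side_pos
  unfold longDist; linarith

theorem toSet_subset_closedBall_longDist {d : ℕ} (Q S : Cube d) :
    S.toSet ⊆ Metric.closedBall Q.center (longDist Q S) := by
  intro y hy
  have hy' : dist y S.center ≤ S.side / 2 := Metric.mem_closedBall.1 hy
  have key : ∀ a ∈ Q.toSet, ∀ b ∈ S.toSet, dist y Q.center - S.side - Q.side / 2 ≤ dist a b := by
    intro a ha b hb
    have ha' : dist a Q.center ≤ Q.side / 2 := Metric.mem_closedBall.1 ha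
    have hb' : dist b S.center ≤ S.side / 2 := Metric.mem_closedBall.1 hb
    have := dist_triangle_right y b S.center
    have := dist_triangle4 y b a Q.center
    rw [dist_comm b a] at this
    linarith
  have hsetDist : dist y Q.center - S.side - Q.side / 2 ≤ setDist Q.toSet S.toSet :=
    le_csInf ⟨_, Set.mem_image2_of_mem Q.center_mem S.center_mem⟩
      (by rintro _ ⟨a, ha, b, hb, rfl⟩; exact key a ha b hb)
  have := Q.side_pos
  exact Metric.mem_closedBall.2 (by unfold longDist; linarith)

namespace WhitneyCovering

variable {d : ℕ} {Ω : Set (Fin d → ℝ)} (W : WhitneyCovering d Ω)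

theorem countable_cubes : W.cubes.Countable :=
  Set.PairwiseDisjoint.countable_of_isOpen (s := fun Q : Cube d => interior Q.toSet)
    (fun Q hQ S hS hne => Set.disjoint_iff_inter_eq_empty.2 (W.essDisjoint Q hQ S hS hne))
    (fun _ _ => isOpen_interior) (fun Q _ => ⟨Q.center, Q.center_mem_interior⟩)

theorem pairwise_aedisjoint : W.cubes.Pairwise (Function.onFun (AEDisjoint volume) Cube.toSet) :=
  fun Q hQ S hS hne => Convex.aedisjoint_of_disjoint_interior volume Q.convex_toSet
    S.convex_toSet (Set.disjoint_iff_inter_eq_empty.2 (W.essDisjoint Q hQ S hS hne))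

theorem tsum_lintegral_le_of_subset (g : (Fin d → ℝ) → ℝ≥0∞) {T : Set (Cube d)}
    (hT : T ⊆ W.cubes) {B : Set (Fin d → ℝ)} (hB : ∀ S ∈ T, S.toSet ⊆ B) :
    ∑' S : T, ∫⁻ y in S.1.toSet, g y ≤ ∫⁻ y in B, g y := by
  rw [← lintegral_biUnion₀ (s := Cube.toSet) (W.countable_cubes.mono hT)
    (fun S _ => measurableSet_closedBall.nullMeasurableSet) (W.pairwise_aedisjoint.mono hT)]
  exact lintegral_mono_set (Set.iUnion₂_subset hB)

theorem tsum_longDist_mem_Ico_le (g : (Fin d → ℝ) → ℝ≥0∞) (Q : Cube d) {η ρ : ℝ}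
    (hη : 0 ≤ η) (hρ : 0 < ρ) :
    ∑' S : {S : Cube d | S ∈ W.cubes ∧ longDist Q S ∈ Set.Ico ρ (2 * ρ)},
        (∫⁻ y in S.1.toSet, g y) / ENNReal.ofReal (longDist Q S ^ ((d : ℝ) + η)) ≤
      ENNReal.ofReal (4 ^ d / ρ ^ η) * ⨅ y ∈ Q.toSet, maximal d g y := by
  set T := {S : Cube d | S ∈ W.cubes ∧ longDist Q S ∈ Set.Ico ρ (2 * ρ)}
  rcases T.eq_empty_or_nonempty with hT | ⟨S₀, hS₀⟩
  · simp [hT]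
  set B := Metric.closedBall Q.center (2 * ρ)
  have hQB : Q.toSet ⊆ B := Metric.closedBall_subset_closedBall
    (by linarith [side_le_longDist Q S₀, hS₀.2.2, Q.side_pos])
  have hSB : ∀ S ∈ T, S.toSet ⊆ B := fun S hS =>
    (toSet_subset_closedBall_longDist Q S).trans (Metric.closedBall_subset_closedBall hS.2.2.le)
  have hvol : volume B = ENNReal.ofReal ((4 * ρ) ^ d) := by
    rw [Real.volume_pi_closedBall _ (by positivity), Fintype.card_fin]
    ring_nf
  have hratio : (4 * ρ) ^ d / ρ ^ ((d : ℝ) + η) = 4 ^ d / ρ ^ η := by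
    rw [Real.rpow_add hρ, Real.rpow_natCast, mul_pow]
    field_simp
  calc ∑' S : T, (∫⁻ y in S.1.toSet, g y) / ENNReal.ofReal (longDist Q S ^ ((d : ℝ) + η))
      ≤ ∑' S : T, (∫⁻ y in S.1.toSet, g y) / ENNReal.ofReal (ρ ^ ((d : ℝ) + η)) :=
        ENNReal.tsum_le_tsum fun S => by gcongr; exact S.2.2.1
    _ = (∑' S : T, ∫⁻ y in S.1.toSet, g y) / ENNReal.ofReal (ρ ^ ((d : ℝ) + η)) := by
        simp only [div_eq_mul_inv, ENNReal.tsum_mul_right]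
    _ ≤ (∫⁻ y in B, g y) / ENNReal.ofReal (ρ ^ ((d : ℝ) + η)) := by
        gcongr; exact W.tsum_lintegral_le_of_subset g (fun S hS => hS.1) hSB
    _ ≤ (⨅ y ∈ Q.toSet, maximal d g y) * volume B / ENNReal.ofReal (ρ ^ ((d : ℝ) + η)) := by
        gcongr; exact lintegral_le_iInf_maximal_mul_volume g (by positivity) hQB
    _ = ENNReal.ofReal (4 ^ d / ρ ^ η) * ⨅ y ∈ Q.toSet, maximal d g y := by
        rw [hvol, mul_div_assoc, ← ENNReal.ofReal_div_of_pos (by positivity), hratio, mul_comm]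

end WhitneyCovering

theorem stmt_7 (d : ℕ) (η : ℝ) (hη : 0 < η) :
    ∃ C : ℝ≥0∞, C ≠ ⊤ ∧
      ∀ (Ω : Set (Fin d → ℝ)), IsOpen Ω → IsConnected Ω → Ω ≠ Set.univ →
      ∀ (W : WhitneyCovering d Ω) (Q : Cube d), Q ∈ W.cubes →
      ∀ (g : (Fin d → ℝ) → ℝ≥0∞), Measurable g → (∫⁻ x in Ω, g x) ≠ ⊤ →
      ∀ r : ℝ, 0 < r →
      (∑' S : {S : Cube d // S ∈ W.cubes ∧ r < longDist Q S},
          (∫⁻ y in (S : Cube d).toSet, g y) /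
            ENNReal.ofReal (longDist Q (S : Cube d) ^ ((d : ℝ) + η))) ≤
        C * (⨅ y ∈ Q.toSet, maximal d g y) / ENNReal.ofReal (r ^ η) := by
  have hq : ENNReal.ofReal ((2 : ℝ) ^ η)⁻¹ < 1 :=
    ENNReal.ofReal_lt_one.2 (inv_lt_one_of_one_lt₀ (Real.one_lt_rpow one_lt_two hη))
  refine ⟨ENNReal.ofReal (4 ^ d) * (1 - ENNReal.ofReal ((2 : ℝ) ^ η)⁻¹)⁻¹,
    ENNReal.mul_ne_top ENNReal.ofReal_ne_top (ENNReal.inv_ne_top.2 (tsub_pos_of_lt hq).ne'), ?_⟩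
  intro Ω _ _ _ W Q _ g _ _ r hr
  calc _ ≤ ∑' k : ℕ, ∑' S : {S : Cube d | S ∈ W.cubes ∧
          longDist Q S ∈ Set.Ico (2 ^ k * r) (2 * (2 ^ k * r))},
          (∫⁻ y in S.1.toSet, g y) / ENNReal.ofReal (longDist Q S ^ ((d : ℝ) + η)) :=
        ENNReal.tsum_subtype_lt_le_tsum_dyadic (D := longDist Q) hr
          fun S => (∫⁻ y in S.toSet, g y) / ENNReal.ofReal (longDist Q S ^ ((d : ℝ) + η))
    _ ≤ ∑' k : ℕ, ENNReal.ofReal (4 ^ d / (2 ^ k * r) ^ η) * ⨅ y ∈ Q.toSet, maximal d g y :=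
        ENNReal.tsum_le_tsum fun k => W.tsum_longDist_mem_Ico_le g Q hη.le (by positivity)
    _ = _ := by
        rw [ENNReal.tsum_mul_right, tsum_ofReal_div_two_pow_mul_rpow (by positivity) hr]
        simp only [div_eq_mul_inv]; ring
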